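/- arXiv:2203.00802 — 9 statements merged into one kernel-verified Lean document; each statement's English description precedes it below -/
import Mathlib

section
/- Let n ≥ 1 and let C ∈ ℝ^{n×n} with C_{ij} ≥ 0 for all i,j and min_{i,j} C_{ij} = 0, and let μ, ν ∈ ℝ^n be probability vectors (nonnegative entries summing to 1). Then there exist vectors u*, v* ∈ ℝ^n such that u*_i + v*_j ≤ C_{ij} for all i,j, such that ⟨u*, μ⟩ + ⟨v*, ν⟩ equals the optimal value min{⟨C, X⟩ : X ∈ ℝ^{n×n}, X_{ij} ≥ 0, X𝟙 = μ, Xᵀ𝟙 = ν} of the discrete optimal transport problem, and such that max_i |u*_i| ≤ ‖C‖/2 and max_j |v*_j| ≤ ‖C‖/2, where ‖C‖ := max_{i,j} C_{ij}. -/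
/-!
The proof is the classical one through cyclical monotonicity. Fix an optimal plan `X`. Moving
mass around a cycle of support cells cannot lower the cost, so the weights
`w (i, j) (i', j') = C i j' - C i j` on the support have no negative closed walk, and the
Floyd–Warshall elimination of vertices produces a potential for them. This potential yields column
prices `v` such that every support cell `(i, j)` minimises `C i · - v` in its row, so `v` and its
c-transform form a dual pair that is tight on the support of `X`, hence dual optimal. Replacing it
by its double c-transform bounds the oscillation of both vectors by `‖C‖`, and a constant shift
`(u - t, v + t)`, which does not change the dual value, centres them in `[-‖C‖/2, ‖C‖/2]`.
-/

open Finset Matrix Filter Topology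

section Walk

variable {α M : Type*}

def walkSum [Add M] (f : α → α → M) : α → List α → α → M
  | x, [], z => f x z
  | x, y :: l, z => f x y + walkSum f y l z

@[simp] lemma walkSum_nil [Add M] (f : α → α → M) (x z : α) : walkSum f x [] z = f x z := rfl

@[simp] lemma walkSum_cons [Add M] (f : α → α → M) (x y z : α) (l : List α) :
    walkSum f x (y :: l) z = f x y + walkSum f y l z := rfl

lemma map_walkSum {N F : Type*} [Add M] [Add N] [FunLike F M N] [AddHomClass F M N] (g : F)
    (f : α → α → M) (x : α) (l : List α) (z : α) :
    g (walkSum f x l z) = walkSum (fun a b => g (f a b)) x l z := by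
  induction l generalizing x with
  | nil => rfl
  | cons y l ih => simp [ih]

@[simp] lemma walkSum_zero [AddZeroClass M] (x : α) (l : List α) (z : α) :
    walkSum (fun _ _ => (0 : M)) x l z = 0 := by
  induction l generalizing x with
  | nil => rfl
  | cons y l ih => simp [ih]

lemma walkSum_sub_telescope [AddCommGroup M] (φ : α → M) (x : α) (l : List α) (z : α) :
    walkSum (fun a b => φ b - φ a) x l z = φ z - φ x := by
  induction l generalizing x with
  | nil => rfl
  | cons y l ih => simp [ih]

lemma walkSum_nonneg [AddZeroClass M] [Preorder M] [AddLeftMono M] {f : α → α → M} {x : α}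
    {l : List α} (z : α) (hf : ∀ a ∈ x :: l, ∀ b, 0 ≤ f a b) : 0 ≤ walkSum f x l z := by
  induction l generalizing x with
  | nil => exact hf x List.mem_cons_self z
  | cons y l ih =>
    exact add_nonneg (hf x List.mem_cons_self y)
      (ih fun a ha => hf a (List.mem_cons_of_mem x ha))

end Walk

section Potential

variable {α : Type*} [DecidableEq α]

/-- Undoing the shortcuts through `a` made by one Floyd–Warshall elimination step. -/
lemma exists_walkSum_le_walkSum_min (w : α → α → ℝ) (a : α) (V : Finset α) (x : α) (l : List α)
    (z : α) (hl : ∀ y ∈ l, y ∈ V) :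
    ∃ l' : List α, (∀ y ∈ l', y ∈ insert a V) ∧
      walkSum w x l' z ≤ walkSum (fun p q => min (w p q) (w p a + w a q)) x l z := by
  induction l generalizing x with
  | nil =>
    rcases min_choice (w x z) (w x a + w a z) with h | h
    · exact ⟨[], by simp, by simp [h]⟩
    · exact ⟨[a], by simp, by simp [h]⟩
  | cons y l ih =>
    have hy : y ∈ insert a V := mem_insert_of_mem (hl y List.mem_cons_self)
    obtain ⟨l', hl'V, hl'⟩ := ih y fun y' hy' => hl y' (List.mem_cons_of_mem y hy')
    rcases min_choice (w x y) (w x a + w a y) with h | h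
    · refine ⟨y :: l', List.forall_mem_cons.2 ⟨hy, hl'V⟩, ?_⟩
      simp only [walkSum_cons, h]; linarith
    · refine ⟨a :: y :: l', List.forall_mem_cons.2 ⟨mem_insert_self a V,
        List.forall_mem_cons.2 ⟨hy, hl'V⟩⟩, ?_⟩
      simp only [walkSum_cons, h]; linarith

theorem exists_potential_of_walkSum_nonneg (V : Finset α) (w : α → α → ℝ)
    (hw : ∀ x l, (∀ y ∈ x :: l, y ∈ V) → 0 ≤ walkSum w x l x) :
    ∃ φ : α → ℝ, ∀ x ∈ V, ∀ y ∈ V, φ y ≤ φ x + w x y := by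
  induction V using Finset.induction_on generalizing w with
  | empty => exact ⟨0, by simp⟩
  | insert a s ha ih =>
    set w' : α → α → ℝ := fun p q => min (w p q) (w p a + w a q)
    have hw' : ∀ x l, (∀ y ∈ x :: l, y ∈ s) → 0 ≤ walkSum w' x l x := by
      intro x l hxl
      obtain ⟨l', hl'V, hl'⟩ := exists_walkSum_le_walkSum_min w a s x l x
        fun y hy => hxl y (List.mem_cons_of_mem x hy)
      have hx : x ∈ insert a s := mem_insert_of_mem (hxl x List.mem_cons_self)
      exact (hw x l' (List.forall_mem_cons.2 ⟨hx, hl'V⟩)).trans hl'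
    obtain ⟨φ, hφ⟩ := ih w' hw'
    have hw'_le : ∀ p q, w' p q ≤ w p q := fun p q => min_le_left _ _
    have hw'_le_via : ∀ p q, w' p q ≤ w p a + w a q := fun p q => min_le_right _ _
    -- `a` receives its shortest-path distance from the potential on `s`
    refine ⟨Function.update φ a (⨅ x : s, φ x + w x a), ?_⟩
    have hne : ∀ x ∈ s, x ≠ a := fun x hx => ne_of_mem_of_not_mem hx ha
    intro x hx y hy
    rcases (mem_insert.1 hx).imp_left Eq.symm with rfl | hx <;>
      rcases (mem_insert.1 hy).imp_left Eq.symm with rfl | hy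
    · simpa using hw a [] (by simp)
    · have : Nonempty s := ⟨⟨y, hy⟩⟩
      obtain ⟨x₀, hx₀⟩ := exists_eq_ciInf_of_finite (f := fun x : s => φ x + w x a)
      simp only [Function.update_self, Function.update_of_ne (hne y hy), ← hx₀]
      linarith [hφ x₀ x₀.2 y hy, hw'_le_via x₀ y]
    · simp only [Function.update_self, Function.update_of_ne (hne x hx)]
      exact ciInf_le (Finite.bddBelow_range fun x : s => φ x + w x a) ⟨x, hx⟩
    · simp only [Function.update_of_ne (hne x hx), Function.update_of_ne (hne y hy)]
      linarith [hφ x hx y hy, hw'_le x y]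

end Potential

section CTransform

variable {ι κ : Type*}

noncomputable def cTransform (C : Matrix ι κ ℝ) (u : ι → ℝ) (j : κ) : ℝ := ⨅ i, C i j - u i

lemma add_cTransform_le [Finite ι] (C : Matrix ι κ ℝ) (u : ι → ℝ) (i : ι) (j : κ) :
    u i + cTransform C u j ≤ C i j := by
  have : cTransform C u j ≤ C i j - u i :=
    ciInf_le (Finite.bddBelow_range fun i => C i j - u i) i
  linarith

lemma cTransform_transpose_add_le [Finite κ] (C : Matrix ι κ ℝ) (v : κ → ℝ) (i : ι) (j : κ) :
    cTransform Cᵀ v i + v j ≤ C i j := by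
  rw [add_comm]
  exact add_cTransform_le Cᵀ v j i

lemma le_cTransform [Nonempty ι] {C : Matrix ι κ ℝ} {u : ι → ℝ} {v : κ → ℝ}
    (huv : ∀ i j, u i + v j ≤ C i j) (j : κ) : v j ≤ cTransform C u j :=
  le_ciInf fun i => by linarith [huv i j]

lemma exists_cTransform_eq [Finite ι] [Nonempty ι] (C : Matrix ι κ ℝ) (u : ι → ℝ) (j : κ) :
    ∃ i, cTransform C u j = C i j - u i := by
  obtain ⟨i, hi⟩ := exists_eq_ciInf_of_finite (f := fun i => C i j - u i)
  exact ⟨i, hi.symm⟩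

lemma cTransform_sub_cTransform_le [Finite ι] [Nonempty ι] {C : Matrix ι κ ℝ} {M : ℝ}
    (hC₀ : ∀ i j, 0 ≤ C i j) (hCM : ∀ i j, C i j ≤ M) (u : ι → ℝ) (j j' : κ) :
    cTransform C u j - cTransform C u j' ≤ M := by
  obtain ⟨i, hi⟩ := exists_cTransform_eq C u j'
  linarith [add_cTransform_le C u i j, hC₀ i j', hCM i j]

end CTransform

lemma exists_abs_sub_le_and_abs_add_le {ι κ : Type*} [Finite ι] [Finite κ] [Nonempty ι]
    [Nonempty κ] {a : ι → ℝ} {b : κ → ℝ} {M : ℝ} (ha : ∀ i i', a i - a i' ≤ M)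
    (hb : ∀ j j', b j - b j' ≤ M) (hab : ∀ i j, |a i + b j| ≤ M) :
    ∃ t, (∀ i, |a i - t| ≤ M / 2) ∧ ∀ j, |b j + t| ≤ M / 2 := by
  set s := max (⨆ i, a i) (⨆ j, -b j)
  have hle_a : ∀ i, a i ≤ s := fun i => le_max_of_le_left (le_ciSup (Finite.bddAbove_range a) i)
  have hle_b : ∀ j, -b j ≤ s := fun j =>
    le_max_of_le_right (le_ciSup (Finite.bddAbove_range fun j => -b j) j)
  have hge_a : ∀ i, s ≤ a i + M := fun i =>
    max_le (ciSup_le fun i' => by linarith [ha i' i])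
      (ciSup_le fun j => by linarith [(abs_le.1 (hab i j)).1])
  have hge_b : ∀ j, s ≤ -b j + M := fun j =>
    max_le (ciSup_le fun i => by linarith [(abs_le.1 (hab i j)).2])
      (ciSup_le fun j' => by linarith [hb j j'])
  refine ⟨s - M / 2, fun i => abs_le.2 ⟨?_, ?_⟩, fun j => abs_le.2 ⟨?_, ?_⟩⟩
  · linarith [hge_a i]
  · linarith [hle_a i]
  · linarith [hle_b j]
  · linarith [hge_b j]

section Transport

variable {ι κ : Type*} [Fintype ι] [Fintype κ]

structure IsTransportPlan (μ : ι → ℝ) (ν : κ → ℝ) (X : Matrix ι κ ℝ) : Prop where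
  nonneg : ∀ i j, 0 ≤ X i j
  sum_row : ∀ i, ∑ j, X i j = μ i
  sum_col : ∀ j, ∑ i, X i j = ν j

def transportCost (C : Matrix ι κ ℝ) : Matrix ι κ ℝ →ₗ[ℝ] ℝ where
  toFun X := ∑ i, ∑ j, C i j * X i j
  map_add' X Y := by simp only [Matrix.add_apply, mul_add, sum_add_distrib]
  map_smul' c X := by
    simp only [Matrix.smul_apply, smul_eq_mul, mul_sum, RingHom.id_apply, mul_left_comm]

lemma transportCost_apply (C X : Matrix ι κ ℝ) :
    transportCost C X = ∑ i, ∑ j, C i j * X i j := rfl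

@[simp] lemma transportCost_single [DecidableEq ι] [DecidableEq κ] (C : Matrix ι κ ℝ) (i : ι)
    (j : κ) : transportCost C (single i j 1) = C i j := by
  simp [transportCost_apply, single_apply, ite_and]

structure IsOptimalTransportPlan (C : Matrix ι κ ℝ) (μ : ι → ℝ) (ν : κ → ℝ)
    (X : Matrix ι κ ℝ) : Prop extends IsTransportPlan μ ν X where
  le_cost : ∀ Y, IsTransportPlan μ ν Y → transportCost C X ≤ transportCost C Y

variable {C X : Matrix ι κ ℝ} {μ : ι → ℝ} {ν : κ → ℝ}

lemma IsTransportPlan.dotProduct_add_dotProduct (hX : IsTransportPlan μ ν X) (u : ι → ℝ)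
    (v : κ → ℝ) : u ⬝ᵥ μ + v ⬝ᵥ ν = ∑ i, ∑ j, (u i + v j) * X i j := by
  simp only [dotProduct, ← hX.sum_row, ← hX.sum_col, mul_sum, add_mul, sum_add_distrib]
  rw [sum_comm (γ := κ)]

lemma IsTransportPlan.nonneg_left (hX : IsTransportPlan μ ν X) : 0 ≤ μ := fun i =>
  hX.sum_row i ▸ sum_nonneg fun j _ => hX.nonneg i j

lemma IsTransportPlan.nonneg_right (hX : IsTransportPlan μ ν X) : 0 ≤ ν := fun j =>
  hX.sum_col j ▸ sum_nonneg fun i _ => hX.nonneg i j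

lemma IsTransportPlan.sum_left_eq_sum_right (hX : IsTransportPlan μ ν X) :
    ∑ i, μ i = ∑ j, ν j := by
  simp only [← hX.sum_row, ← hX.sum_col]
  exact sum_comm

lemma IsTransportPlan.dual_le_cost (hX : IsTransportPlan μ ν X) {u : ι → ℝ} {v : κ → ℝ}
    (huv : ∀ i j, u i + v j ≤ C i j) : u ⬝ᵥ μ + v ⬝ᵥ ν ≤ transportCost C X := by
  rw [hX.dotProduct_add_dotProduct]
  exact sum_le_sum fun i _ => sum_le_sum fun j _ =>
    mul_le_mul_of_nonneg_right (huv i j) (hX.nonneg i j)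

lemma IsTransportPlan.dual_eq_cost (hX : IsTransportPlan μ ν X) {u : ι → ℝ} {v : κ → ℝ}
    (huv : ∀ i j, 0 < X i j → u i + v j = C i j) : u ⬝ᵥ μ + v ⬝ᵥ ν = transportCost C X := by
  rw [hX.dotProduct_add_dotProduct]
  refine sum_congr rfl fun i _ => sum_congr rfl fun j _ => ?_
  rcases (hX.nonneg i j).lt_or_eq with h | h
  · rw [huv i j h]
  · simp [← h]

/-- First-order optimality of `X` in the feasible direction `D`. -/
lemma IsOptimalTransportPlan.transportCost_nonneg (hX : IsOptimalTransportPlan C μ ν X)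
    {D : Matrix ι κ ℝ} (hrow : ∀ i, ∑ j, D i j = 0) (hcol : ∀ j, ∑ i, D i j = 0)
    (hD : ∀ i j, X i j = 0 → 0 ≤ D i j) : 0 ≤ transportCost C D := by
  have hsmall : ∀ᶠ ε in 𝓝[>] (0 : ℝ), ∀ i j, 0 ≤ X i j + ε * D i j := by
    simp only [eventually_all]
    intro i j
    rcases (hX.nonneg i j).lt_or_eq with h | h
    · have : Tendsto (fun ε => X i j + ε * D i j) (𝓝[>] 0) (𝓝 (X i j)) :=
        tendsto_nhdsWithin_of_tendsto_nhds
          ((continuous_const.add (continuous_id.mul continuous_const)).tendsto' 0 _ (by simp))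
      exact (this.eventually_const_le h).mono fun ε hε => hε
    · filter_upwards [self_mem_nhdsWithin] with ε hε
      rw [← h, zero_add]
      exact mul_nonneg (le_of_lt hε) (hD i j h.symm)
  obtain ⟨ε, hεX, hε⟩ := (hsmall.and self_mem_nhdsWithin).exists
  have hY : IsTransportPlan μ ν (X + ε • D) :=
    { nonneg := fun i j => hεX i j
      sum_row := fun i => by simp [sum_add_distrib, ← mul_sum, hrow, hX.sum_row]
      sum_col := fun j => by simp [sum_add_distrib, ← mul_sum, hcol, hX.sum_col] }
  have := hX.le_cost _ hY
  rw [map_add, map_smul, smul_eq_mul, le_add_iff_nonneg_right] at this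
  exact nonneg_of_mul_nonneg_right this hε

/-- Cyclical monotonicity: moving a unit of mass from `(i, j)` to `(i, j')` along every edge
`(i, j) → (i', j')` of a closed walk in the support is a feasible direction for `X`. -/
lemma IsOptimalTransportPlan.cyclicallyMonotone (hX : IsOptimalTransportPlan C μ ν X) (x : ι × κ)
    (l : List (ι × κ)) (hsupp : ∀ p ∈ x :: l, 0 < X p.1 p.2) :
    0 ≤ walkSum (fun p q => C p.1 q.2 - C p.1 p.2) x l x := by
  classical
  let shift : ι × κ → ι × κ → Matrix ι κ ℝ := fun p q => single p.1 q.2 1 - single p.1 p.2 1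
  set D := walkSum shift x l x
  have hcost : transportCost C D = walkSum (fun p q => C p.1 q.2 - C p.1 p.2) x l x := by
    simp [D, map_walkSum, shift]
  have hentry : ∀ i j, D i j = walkSum (fun p q => shift p q i j) x l x := fun i j =>
    map_walkSum (⟨fun D : Matrix ι κ ℝ => D i j, fun _ _ => rfl⟩ : AddHom _ ℝ) shift x l x
  have hrow : ∀ i, ∑ j, D i j = walkSum (fun p q => ∑ j, shift p q i j) x l x := fun i =>
    map_walkSum (⟨fun D : Matrix ι κ ℝ => ∑ j, D i j, fun _ _ => sum_add_distrib⟩ : AddHom _ ℝ)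
      shift x l x
  have hcol : ∀ j, ∑ i, D i j = walkSum (fun p q => ∑ i, shift p q i j) x l x := fun j =>
    map_walkSum (⟨fun D : Matrix ι κ ℝ => ∑ i, D i j, fun _ _ => sum_add_distrib⟩ : AddHom _ ℝ)
      shift x l x
  rw [← hcost]
  refine hX.transportCost_nonneg (fun i => ?_) (fun j => ?_) (fun i j hij => ?_)
  · simp [hrow, shift, single_apply, ite_and]
  · simpa [hcol, shift, single_apply, ite_and] using
      walkSum_sub_telescope (fun p : ι × κ => if p.2 = j then (1 : ℝ) else 0) x l x
  · rw [hentry]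
    refine walkSum_nonneg x fun p hp q => ?_
    have hne : ¬(p.1 = i ∧ p.2 = j) := fun h => (hsupp p hp).ne' (h.1 ▸ h.2 ▸ hij)
    simp only [shift, Matrix.sub_apply, single_apply_of_ne _ _ (1 : ℝ) _ _ hne, sub_zero,
      single_apply]
    positivity

lemma IsOptimalTransportPlan.exists_potential (hX : IsOptimalTransportPlan C μ ν X) :
    ∃ v : κ → ℝ, ∀ i j, 0 < X i j → ∀ j', C i j - v j ≤ C i j' - v j' := by
  classical
  let S := univ.filter fun p : ι × κ => 0 < X p.1 p.2
  obtain ⟨φ, hφ⟩ := exists_potential_of_walkSum_nonneg S _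
    fun x l hxl => hX.cyclicallyMonotone x l fun p hp => by simpa [S] using hxl p hp
  refine ⟨fun j => ⨅ p : S, φ p + (C p.1.1 j - C p.1.1 p.1.2), fun i j hij j' => ?_⟩
  have hij : (i, j) ∈ S := by simpa [S] using hij
  have : Nonempty S := ⟨⟨_, hij⟩⟩
  have h₁ : φ (i, j) ≤ ⨅ p : S, φ p + (C p.1.1 j - C p.1.1 p.1.2) :=
    le_ciInf fun p => hφ p p.2 _ hij
  have h₂ : ⨅ p : S, φ p + (C p.1.1 j' - C p.1.1 p.1.2) ≤ φ (i, j) + (C i j' - C i j) :=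
    ciInf_le (Finite.bddBelow_range fun p : S => φ p + (C p.1.1 j' - C p.1.1 p.1.2)) ⟨_, hij⟩
  linarith

lemma IsOptimalTransportPlan.exists_tight_dual (hX : IsOptimalTransportPlan C μ ν X) :
    ∃ (u : ι → ℝ) (v : κ → ℝ), (∀ i j, u i + v j ≤ C i j) ∧
      ∀ i j, 0 < X i j → u i + v j = C i j := by
  obtain ⟨v, hv⟩ := hX.exists_potential
  refine ⟨cTransform Cᵀ v, v, fun i j => ?_, fun i j hij => ?_⟩
  · exact cTransform_transpose_add_le C v i j
  · have : Nonempty κ := ⟨j⟩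
    have : C i j - v j ≤ cTransform Cᵀ v i := le_ciInf fun j' => hv i j hij j'
    linarith [cTransform_transpose_add_le C v i j]

theorem IsOptimalTransportPlan.exists_bounded_dual [Nonempty ι] [Nonempty κ]
    (hX : IsOptimalTransportPlan C μ ν X) {M : ℝ} (hC₀ : ∀ i j, 0 ≤ C i j)
    (hCM : ∀ i j, C i j ≤ M) :
    ∃ (u : ι → ℝ) (v : κ → ℝ), (∀ i j, u i + v j ≤ C i j) ∧
      u ⬝ᵥ μ + v ⬝ᵥ ν = transportCost C X ∧ (∀ i, |u i| ≤ M / 2) ∧ ∀ j, |v j| ≤ M / 2 := by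
  obtain ⟨u, v, huv, htight⟩ := hX.exists_tight_dual
  set u' := cTransform Cᵀ v
  set v' := cTransform C u'
  have hfeas : ∀ i j, u' i + v' j ≤ C i j := add_cTransform_le C u'
  have hu : u ≤ u' := le_cTransform (C := Cᵀ) fun j i => by simpa [add_comm] using huv i j
  have hv : v ≤ v' := le_cTransform (cTransform_transpose_add_le C v)
  have hval : u' ⬝ᵥ μ + v' ⬝ᵥ ν = transportCost C X := by
    refine le_antisymm (hX.dual_le_cost hfeas) ?_
    rw [← hX.dual_eq_cost htight]
    exact add_le_add (dotProduct_le_dotProduct_of_nonneg_right hu hX.nonneg_left)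
      (dotProduct_le_dotProduct_of_nonneg_right hv hX.nonneg_right)
  have hosc_u : ∀ i i', u' i - u' i' ≤ M :=
    cTransform_sub_cTransform_le (C := Cᵀ) (fun j i => hC₀ i j) (fun j i => hCM i j) v
  have hsum : ∀ i j, |u' i + v' j| ≤ M := fun i j => by
    obtain ⟨i₀, hi₀⟩ := exists_cTransform_eq C u' j
    exact abs_le.2 ⟨by linarith [hosc_u i₀ i, hC₀ i₀ j], (hfeas i j).trans (hCM i j)⟩
  obtain ⟨t, hut, hvt⟩ := exists_abs_sub_le_and_abs_add_le hosc_u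
    (cTransform_sub_cTransform_le hC₀ hCM u') hsum
  refine ⟨u' - fun _ => t, v' + fun _ => t, fun i j => by simpa using hfeas i j, ?_, hut, hvt⟩
  have hmass : (fun _ => t) ⬝ᵥ μ = (fun _ => t) ⬝ᵥ ν := by
    simp only [dotProduct, ← mul_sum, hX.sum_left_eq_sum_right]
  rw [sub_dotProduct, add_dotProduct, ← hval, hmass]
  ring

end Transport

theorem dual_solution_bounded_by_half_cost_general
    (n : ℕ) (hn : 1 ≤ n) (C : Matrix (Fin n) (Fin n) ℝ)
    (hC : ∀ i j, 0 ≤ C i j)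
    (μ ν : Fin n → ℝ)
    (Cmax : ℝ) (hCmax : IsGreatest {r : ℝ | ∃ i j, C i j = r} Cmax)
    (opt : ℝ)
    (hopt : IsLeast {t : ℝ | ∃ X : Matrix (Fin n) (Fin n) ℝ,
      (∀ i j, 0 ≤ X i j) ∧ (∀ i, ∑ j, X i j = μ i) ∧ (∀ j, ∑ i, X i j = ν j) ∧
      ∑ i, ∑ j, C i j * X i j = t} opt) :
    ∃ u v : Fin n → ℝ,
      (∀ i j, u i + v j ≤ C i j) ∧
      (∑ i, u i * μ i) + (∑ j, v j * ν j) = opt ∧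
      (∀ i, |u i| ≤ Cmax / 2) ∧ (∀ j, |v j| ≤ Cmax / 2) := by
  have : Nonempty (Fin n) := ⟨⟨0, hn⟩⟩
  obtain ⟨X, hX₀, hX_row, hX_col, rfl⟩ := hopt.1
  have hX : IsOptimalTransportPlan C μ ν X :=
    { nonneg := hX₀, sum_row := hX_row, sum_col := hX_col
      le_cost := fun Y hY => hopt.2 ⟨Y, hY.nonneg, hY.sum_row, hY.sum_col, rfl⟩ }
  exact hX.exists_bounded_dual hC fun i j => hCmax.2 ⟨i, j, rfl⟩

/-- **Existence of a bounded dual optimal pair for optimal transport.**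
If `C` is a nonnegative cost matrix with `min_{i,j} C i j = 0` and `μ, ν` are
probability vectors, then there is a dual feasible pair `(u, v)` whose dual value
equals the optimal transport value and whose entries are bounded by `‖C‖/2`,
where `‖C‖ = max_{i,j} C i j`. -/
theorem dual_solution_bounded_by_half_cost
    (n : ℕ) (hn : 1 ≤ n) (C : Matrix (Fin n) (Fin n) ℝ)
    (hC : ∀ i j, 0 ≤ C i j) (hCmin : ∃ i j, C i j = 0)
    (μ ν : Fin n → ℝ) (hμ0 : ∀ i, 0 ≤ μ i) (hμ1 : ∑ i, μ i = 1)
    (hν0 : ∀ j, 0 ≤ ν j) (hν1 : ∑ j, ν j = 1)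
    (Cmax : ℝ) (hCmax : IsGreatest {r : ℝ | ∃ i j, C i j = r} Cmax)
    (opt : ℝ)
    (hopt : IsLeast {t : ℝ | ∃ X : Matrix (Fin n) (Fin n) ℝ,
      (∀ i j, 0 ≤ X i j) ∧ (∀ i, ∑ j, X i j = μ i) ∧ (∀ j, ∑ i, X i j = ν j) ∧
      ∑ i, ∑ j, C i j * X i j = t} opt) :
    ∃ u v : Fin n → ℝ,
      (∀ i j, u i + v j ≤ C i j) ∧
      (∑ i, u i * μ i) + (∑ j, v j * ν j) = opt ∧
      (∀ i, |u i| ≤ Cmax / 2) ∧ (∀ j, |v j| ≤ Cmax / 2) :=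
  dual_solution_bounded_by_half_cost_general n hn C hC μ ν Cmax hCmax opt hopt
end

section
/- Let n ≥ 2, let μ = e₁ and ν = e_n be the first and last standard basis vectors of ℝ^n, and let C ∈ ℝ^{n×n} be the matrix with C_{1,n} = 1 and all other entries 0 (so ‖C‖ = max_{i,j} C_{ij} = 1). Then the optimal value of the optimal transport problem min{⟨C, X⟩ : X ≥ 0, X𝟙 = μ, Xᵀ𝟙 = ν} equals 1, and every pair (u, v) ∈ ℝ^n × ℝ^n satisfying u_i + v_j ≤ C_{ij} for all i,j and ⟨u, μ⟩ + ⟨v, ν⟩ = 1 satisfies max{max_i |u_i|, max_j |v_j|} ≥ 1/2 = ‖C‖/2. -/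
/-- **Tightness of the `‖C‖/2` dual bound.**
For `μ = e₁`, `ν = e_n` and `C` with a single nonzero entry `C (1, n) = 1`
(so `‖C‖ = 1`), the optimal transport value equals `1`, and every dual optimal
pair `(u, v)` satisfies `max{max_i |u i|, max_j |v j|} ≥ 1/2 = ‖C‖/2`. -/
theorem dual_bound_half_cost_tight
    (n : ℕ) (hn : 2 ≤ n)
    (μ ν : Fin n → ℝ) (C : Matrix (Fin n) (Fin n) ℝ)
    (hμ : ∀ i, μ i = if i = (⟨0, by omega⟩ : Fin n) then 1 else 0)
    (hν : ∀ j, ν j = if j = (⟨n - 1, by omega⟩ : Fin n) then 1 else 0)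
    (hC : ∀ i j, C i j =
      if i = (⟨0, by omega⟩ : Fin n) ∧ j = (⟨n - 1, by omega⟩ : Fin n) then 1 else 0) :
    IsLeast {t : ℝ | ∃ X : Matrix (Fin n) (Fin n) ℝ,
      (∀ i j, 0 ≤ X i j) ∧ (∀ i, ∑ j, X i j = μ i) ∧ (∀ j, ∑ i, X i j = ν j) ∧
      ∑ i, ∑ j, C i j * X i j = t} 1 ∧
    ∀ u v : Fin n → ℝ, (∀ i j, u i + v j ≤ C i j) →
      (∑ i, u i * μ i) + (∑ j, v j * ν j) = 1 →
      (∃ i, 1 / 2 ≤ |u i|) ∨ (∃ j, 1 / 2 ≤ |v j|) := by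
  have h0 : 0 < n := by omega
  set i0 : Fin n := ⟨0, by omega⟩ with hi0
  set jn : Fin n := ⟨n - 1, by omega⟩ with hjn
  constructor
  · constructor
    · refine ⟨fun i j => if i = i0 ∧ j = jn then 1 else 0, ?_, ?_, ?_, ?_⟩
      · intro i j; dsimp only; split <;> norm_num
      · intro i; rw [hμ i]
        by_cases h : i = i0 <;> simp [h, Finset.sum_ite_eq']
      · intro j; rw [hν j]
        by_cases h : j = jn <;> simp [h, Finset.sum_ite_eq']
      · simp [hC, ite_and, Finset.sum_ite_eq']
    · rintro t ⟨X, hpos, hrow, hcol, hcost⟩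
      have hX0 : ∀ i, i ≠ i0 → X i jn = 0 := by
        intro i hi
        have hsum := hrow i
        rw [hμ i, if_neg hi] at hsum
        have h1 : X i jn ≤ ∑ j, X i j :=
          Finset.single_le_sum (fun j _ => hpos i j) (Finset.mem_univ jn)
        have := hpos i jn
        linarith
      have hcoln := hcol jn
      rw [hν jn, if_pos rfl] at hcoln
      have hsum : ∑ i, X i jn = X i0 jn :=
        Finset.sum_eq_single i0 (fun i _ hi => hX0 i hi) (by simp)
      have hc : ∑ i, ∑ j, C i j * X i j = X i0 jn := by
        simp [hC, ite_and, Finset.sum_ite_eq']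
      rw [hc] at hcost
      rw [hsum] at hcoln
      linarith
  · intro u v hdual hopt
    have hu : ∑ i, u i * μ i = u i0 := by
      simp [hμ, mul_ite, Finset.sum_ite_eq']
    have hv : ∑ j, v j * ν j = v jn := by
      simp [hν, mul_ite, Finset.sum_ite_eq']
    rw [hu, hv] at hopt
    rcases le_or_gt (1 / 2) (u i0) with h | h
    · exact Or.inl ⟨i0, le_trans h (le_abs_self _)⟩
    · refine Or.inr ⟨jn, le_trans ?_ (le_abs_self _)⟩
      linarith
end

section
/- Let n ≥ 1, let X ∈ ℝ^{n×n} with X_{ij} ≥ 0 and Σ_{i,j} X_{ij} = 1, and let μ, ν ∈ ℝ^n be probability vectors. Then there exists Y ∈ ℝ^{n×n} with Y_{ij} ≥ 0 for all i,j, Y𝟙 = μ, Yᵀ𝟙 = ν, and ‖Y − X‖₁ ≤ ‖μ − X𝟙‖₁ + ‖ν − Xᵀ𝟙‖₁. -/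
private lemma aux_sum_abs {n : ℕ} (g : Fin n → ℝ) (h : ∑ i, g i = 0) :
    ∑ i, |g i| = 2 * ∑ i, max (g i) 0 := by
  have key : ∀ x : ℝ, |x| = 2 * max x 0 - x := by
    intro x
    rcases le_total x 0 with hx | hx
    · rw [abs_of_nonpos hx, max_eq_right hx]; ring
    · rw [abs_of_nonneg hx, max_eq_left hx]; ring
  calc ∑ i, |g i| = ∑ i, (2 * max (g i) 0 - g i) :=
        Finset.sum_congr rfl fun i _ => key (g i)
    _ = 2 * ∑ i, max (g i) 0 - ∑ i, g i := by
        rw [Finset.sum_sub_distrib, Finset.mul_sum]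
    _ = _ := by rw [h, sub_zero]

private lemma aux_min_mul {a R : ℝ} (hR : 0 ≤ R) (ha : 0 ≤ a) :
    min 1 (a / R) * R = min R a := by
  rcases eq_or_lt_of_le hR with h | h
  · rw [← h, mul_zero]
    exact (min_eq_left ha).symm
  · rw [min_mul_of_nonneg _ _ hR, one_mul, div_mul_cancel₀ _ h.ne']

private lemma aux_sub_min (a b : ℝ) : a - min a b = max (a - b) 0 := by
  rcases le_total a b with h | h
  · rw [min_eq_left h, max_eq_right (by linarith)]; ring
  · rw [min_eq_right h, max_eq_left (by linarith)]

/-- **Rounding lemma (improved Lemma 7 of Altschuler–Weed–Rigollet).**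
Any matrix `X` in the matrix simplex can be rounded to a matrix `Y` with exact
marginals `μ, ν`, at an `ℓ¹`-cost bounded by the sum of the marginal violations. -/
theorem rounding_to_marginals
    (n : ℕ) (hn : 1 ≤ n) (X : Matrix (Fin n) (Fin n) ℝ)
    (hX0 : ∀ i j, 0 ≤ X i j) (hX1 : ∑ i, ∑ j, X i j = 1)
    (μ ν : Fin n → ℝ) (hμ0 : ∀ i, 0 ≤ μ i) (hμ1 : ∑ i, μ i = 1)
    (hν0 : ∀ j, 0 ≤ ν j) (hν1 : ∑ j, ν j = 1) :
    ∃ Y : Matrix (Fin n) (Fin n) ℝ,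
      (∀ i j, 0 ≤ Y i j) ∧ (∀ i, ∑ j, Y i j = μ i) ∧ (∀ j, ∑ i, Y i j = ν j) ∧
      ∑ i, ∑ j, |Y i j - X i j| ≤
        (∑ i, |μ i - ∑ j, X i j|) + (∑ j, |ν j - ∑ i, X i j|) := by
  classical
  set r : Fin n → ℝ := fun i => ∑ j, X i j with hrdef
  set c : Fin n → ℝ := fun j => ∑ i, X i j with hcdef
  have hr0 : ∀ i, 0 ≤ r i := fun i => Finset.sum_nonneg fun j _ => hX0 i j
  have hc0 : ∀ j, 0 ≤ c j := fun j => Finset.sum_nonneg fun i _ => hX0 i j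
  have hrs : ∑ i, r i = 1 := hX1
  have hcs : ∑ j, c j = 1 := by rw [← hX1, Finset.sum_comm]
  set α : Fin n → ℝ := fun i => min 1 (μ i / r i) with hαdef
  have hα0 : ∀ i, 0 ≤ α i := fun i => le_min zero_le_one (div_nonneg (hμ0 i) (hr0 i))
  have hα1 : ∀ i, α i ≤ 1 := fun i => min_le_left _ _
  set X1m : Matrix (Fin n) (Fin n) ℝ := fun i j => α i * X i j with hX1def
  have hX1nn : ∀ i j, 0 ≤ X1m i j := fun i j => mul_nonneg (hα0 i) (hX0 i j)
  have hX1le : ∀ i j, X1m i j ≤ X i j := fun i j => by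
    simpa using mul_le_mul_of_nonneg_right (hα1 i) (hX0 i j)
  have hX1row : ∀ i, ∑ j, X1m i j = min (r i) (μ i) := by
    intro i
    have h1 : ∑ j, X1m i j = α i * r i := by
      simp only [hX1def, hrdef, Finset.mul_sum]
    rw [h1, hαdef]
    exact aux_min_mul (hr0 i) (hμ0 i)
  set c1 : Fin n → ℝ := fun j => ∑ i, X1m i j with hc1def
  have hc10 : ∀ j, 0 ≤ c1 j := fun j => Finset.sum_nonneg fun i _ => hX1nn i j
  have hc1le : ∀ j, c1 j ≤ c j := fun j => Finset.sum_le_sum fun i _ => hX1le i j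
  set β : Fin n → ℝ := fun j => min 1 (ν j / c1 j) with hβdef
  have hβ0 : ∀ j, 0 ≤ β j := fun j => le_min zero_le_one (div_nonneg (hν0 j) (hc10 j))
  have hβ1 : ∀ j, β j ≤ 1 := fun j => min_le_left _ _
  set X2 : Matrix (Fin n) (Fin n) ℝ := fun i j => X1m i j * β j with hX2def
  have hX2nn : ∀ i j, 0 ≤ X2 i j := fun i j => mul_nonneg (hX1nn i j) (hβ0 j)
  have hX2leX1 : ∀ i j, X2 i j ≤ X1m i j := fun i j => by
    simpa using mul_le_mul_of_nonneg_left (hβ1 j) (hX1nn i j)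
  have hX2le : ∀ i j, X2 i j ≤ X i j := fun i j => le_trans (hX2leX1 i j) (hX1le i j)
  have hX2col : ∀ j, ∑ i, X2 i j = min (c1 j) (ν j) := by
    intro j
    have h1 : ∑ i, X2 i j = β j * c1 j := by
      simp only [hX2def, hc1def, Finset.mul_sum]
      exact Finset.sum_congr rfl fun i _ => (mul_comm _ _)
    rw [h1]
    exact aux_min_mul (hc10 j) (hν0 j)
  have hr2le : ∀ i, ∑ j, X2 i j ≤ μ i := by
    intro i
    calc ∑ j, X2 i j ≤ ∑ j, X1m i j := Finset.sum_le_sum fun j _ => hX2leX1 i j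
      _ = min (r i) (μ i) := hX1row i
      _ ≤ μ i := min_le_right _ _
  set e : Fin n → ℝ := fun i => μ i - ∑ j, X2 i j with hedef
  set f : Fin n → ℝ := fun j => ν j - ∑ i, X2 i j with hfdef
  have he0 : ∀ i, 0 ≤ e i := fun i => sub_nonneg.2 (hr2le i)
  have hf0 : ∀ j, 0 ≤ f j := fun j =>
    sub_nonneg.2 (by rw [hX2col]; exact min_le_right _ _)
  set m : ℝ := ∑ i, ∑ j, X2 i j with hmdef
  set s : ℝ := 1 - m with hsdef
  have hse : ∑ i, e i = s := by
    simp only [hedef, Finset.sum_sub_distrib, hμ1, hsdef, hmdef]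
  have hsf : ∑ j, f j = s := by
    have hcomm : ∑ j, ∑ i, X2 i j = m := by rw [hmdef, Finset.sum_comm]
    simp only [hfdef, Finset.sum_sub_distrib, hν1, hsdef, hcomm]
  have hs0 : 0 ≤ s := hse ▸ Finset.sum_nonneg fun i _ => he0 i
  -- the rounded matrix
  refine ⟨fun i j => X2 i j + e i * f j / s, ?_, ?_, ?_, ?_⟩
  · intro i j
    exact add_nonneg (hX2nn i j) (div_nonneg (mul_nonneg (he0 i) (hf0 j)) hs0)
  · intro i
    have h1 : ∑ j, (X2 i j + e i * f j / s) = (∑ j, X2 i j) + e i * s / s := by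
      rw [Finset.sum_add_distrib]
      congr 1
      rw [← hsf, Finset.mul_sum, Finset.sum_div]
    rw [h1]
    rcases eq_or_ne s 0 with hs | hs
    · have hei : e i = 0 :=
        (Finset.sum_eq_zero_iff_of_nonneg (fun i _ => he0 i)).1 (hse.trans hs) i
          (Finset.mem_univ i)
      have h2 : μ i - ∑ j, X2 i j = 0 := hei
      rw [hei]
      simp only [zero_mul, zero_div, add_zero]
      linarith
    · rw [mul_div_assoc, div_self hs, mul_one]
      have h2 : e i = μ i - ∑ j, X2 i j := rfl
      linarith [h2]
  · intro j
    have h1 : ∑ i, (X2 i j + e i * f j / s) = (∑ i, X2 i j) + s * f j / s := by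
      rw [Finset.sum_add_distrib]
      congr 1
      rw [← hse, Finset.sum_mul, Finset.sum_div]
    rw [h1]
    rcases eq_or_ne s 0 with hs | hs
    · have hfj : f j = 0 :=
        (Finset.sum_eq_zero_iff_of_nonneg (fun j _ => hf0 j)).1 (hsf.trans hs) j
          (Finset.mem_univ j)
      have h2 : ν j - ∑ i, X2 i j = 0 := hfj
      rw [hfj]
      simp only [mul_zero, zero_div, add_zero]
      linarith
    · rw [mul_comm, mul_div_assoc, div_self hs, mul_one]
      have h2 : f j = ν j - ∑ i, X2 i j := rfl
      linarith [h2]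
  -- cost bound
  · have hcost : ∑ i, ∑ j, |X2 i j + e i * f j / s - X i j| ≤ s + s := by
      have hb : ∀ i j, |X2 i j + e i * f j / s - X i j| ≤
          (X i j - X2 i j) + e i * f j / s := by
        intro i j
        have h1 : |X2 i j - X i j| = X i j - X2 i j := by
          rw [abs_of_nonpos (by linarith [hX2le i j])]; ring
        calc |X2 i j + e i * f j / s - X i j|
            = |(X2 i j - X i j) + e i * f j / s| := by congr 1; ring
          _ ≤ |X2 i j - X i j| + |e i * f j / s| := abs_add_le _ _
          _ = (X i j - X2 i j) + e i * f j / s := by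
              rw [h1, abs_of_nonneg (div_nonneg (mul_nonneg (he0 i) (hf0 j)) hs0)]
      have hsum1 : ∑ i, ∑ j, (X i j - X2 i j) = s := by
        simp only [Finset.sum_sub_distrib]
        rw [hX1, ← hmdef, hsdef]
      have hsum2 : ∑ i, ∑ j, e i * f j / s = s := by
        have h1 : ∀ i, ∑ j, e i * f j / s = e i * s / s := by
          intro i
          rw [← hsf, Finset.mul_sum, Finset.sum_div]
        simp only [h1]
        rcases eq_or_ne s 0 with hs | hs
        · simp [hs]
        · simp only [mul_div_assoc, div_self hs, mul_one]
          exact hse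
      calc ∑ i, ∑ j, |X2 i j + e i * f j / s - X i j|
          ≤ ∑ i, ∑ j, ((X i j - X2 i j) + e i * f j / s) :=
            Finset.sum_le_sum fun i _ => Finset.sum_le_sum fun j _ => hb i j
        _ = s + s := by
            simp only [Finset.sum_add_distrib]
            rw [hsum1, hsum2]
    have hA : ∑ i, |μ i - r i| = 2 * ∑ i, max (r i - μ i) 0 := by
      have h0 : ∑ i, (r i - μ i) = 0 := by
        rw [Finset.sum_sub_distrib, hrs, hμ1, sub_self]
      calc ∑ i, |μ i - r i| = ∑ i, |r i - μ i| :=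
            Finset.sum_congr rfl fun i _ => abs_sub_comm _ _
        _ = 2 * ∑ i, max (r i - μ i) 0 := aux_sum_abs _ h0
    have hB : ∑ j, |ν j - c j| = 2 * ∑ j, max (c j - ν j) 0 := by
      have h0 : ∑ j, (c j - ν j) = 0 := by
        rw [Finset.sum_sub_distrib, hcs, hν1, sub_self]
      calc ∑ j, |ν j - c j| = ∑ j, |c j - ν j| :=
            Finset.sum_congr rfl fun j _ => abs_sub_comm _ _
        _ = 2 * ∑ j, max (c j - ν j) 0 := aux_sum_abs _ h0
    have hdecomp : s = (∑ i, max (r i - μ i) 0) + (∑ j, max (c1 j - ν j) 0) := by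
      have h1 : ∑ j, c1 j = ∑ i, min (r i) (μ i) := by
        rw [hc1def]
        rw [Finset.sum_comm]
        exact Finset.sum_congr rfl fun i _ => hX1row i
      have h2 : m = ∑ j, min (c1 j) (ν j) := by
        rw [hmdef, Finset.sum_comm]
        exact Finset.sum_congr rfl fun j _ => hX2col j
      have h3 : ∑ i, max (r i - μ i) 0 = ∑ i, (r i - min (r i) (μ i)) :=
        Finset.sum_congr rfl fun i _ => (aux_sub_min _ _).symm
      have h4 : ∑ j, max (c1 j - ν j) 0 = ∑ j, (c1 j - min (c1 j) (ν j)) :=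
        Finset.sum_congr rfl fun j _ => (aux_sub_min _ _).symm
      rw [h3, h4, Finset.sum_sub_distrib, Finset.sum_sub_distrib, hrs, ← h1, ← h2, hsdef]
      ring
    have hmono : ∑ j, max (c1 j - ν j) 0 ≤ ∑ j, max (c j - ν j) 0 :=
      Finset.sum_le_sum fun j _ =>
        max_le_max (sub_le_sub_right (hc1le j) _) le_rfl
    have hfinal : ∑ i, ∑ j, |X2 i j + e i * f j / s - X i j| ≤
        (∑ i, |μ i - r i|) + (∑ j, |ν j - c j|) := by
      rw [hA, hB]
      calc ∑ i, ∑ j, |X2 i j + e i * f j / s - X i j| ≤ s + s := hcost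
        _ ≤ 2 * ((∑ i, max (r i - μ i) 0) + (∑ j, max (c j - ν j) 0)) := by
            have := hdecomp
            nlinarith [hmono]
        _ = 2 * (∑ i, max (r i - μ i) 0) + 2 * (∑ j, max (c j - ν j) 0) := by ring
    exact hfinal
end

section
/- Let n ≥ 1, let X ∈ ℝ^{n×n} with X_{ij} ≥ 0 and Σ_{i,j} X_{ij} = 1, and let μ ∈ ℝ^n be a probability vector. Define X' ∈ ℝ^{n×n} by X'_{ij} = X_{ij} if (X𝟙)_i ≤ μ_i, and X'_{ij} = (μ_i / (X𝟙)_i) · X_{ij} otherwise. Then ‖X − X'‖₁ = (1/2) ‖X𝟙 − μ‖₁. -/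
/-- **Row-rescaling step of the rounding procedure.**
If `X'` is obtained from `X ∈ Δ` by scaling down the rows whose sum exceeds `μ i`
so that they sum exactly to `μ i`, then `‖X − X'‖₁ = (1/2)‖X𝟙 − μ‖₁`. -/
theorem row_rescaling_l1_cost
    (n : ℕ) (hn : 1 ≤ n) (X : Matrix (Fin n) (Fin n) ℝ)
    (hX0 : ∀ i j, 0 ≤ X i j) (hX1 : ∑ i, ∑ j, X i j = 1)
    (μ : Fin n → ℝ) (hμ0 : ∀ i, 0 ≤ μ i) (hμ1 : ∑ i, μ i = 1)
    (X' : Matrix (Fin n) (Fin n) ℝ)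
    (hX' : ∀ i j, X' i j =
      if (∑ j', X i j') ≤ μ i then X i j else (μ i / ∑ j', X i j') * X i j) :
    ∑ i, ∑ j, |X i j - X' i j| = (1 / 2) * ∑ i, |(∑ j, X i j) - μ i| := by
  have key : ∀ i, ∑ j, |X i j - X' i j| = max ((∑ j, X i j) - μ i) 0 := by
    intro i
    by_cases h : (∑ j', X i j') ≤ μ i
    · have : ∀ j, |X i j - X' i j| = 0 := by
        intro j; rw [hX' i j, if_pos h]; simp
      simp [this, max_eq_right (by linarith : (∑ j, X i j) - μ i ≤ 0)]
    · push_neg at h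
      have hr : 0 < ∑ j', X i j' := lt_of_le_of_lt (hμ0 i) h
      have : ∀ j, |X i j - X' i j| = (1 - μ i / ∑ j', X i j') * X i j := by
        intro j; rw [hX' i j, if_neg (not_le.mpr h)]
        have h1 : μ i / ∑ j', X i j' ≤ 1 := by
          rw [div_le_one hr]; exact h.le
        rw [abs_of_nonneg]
        · ring
        · nlinarith [hX0 i j]
      rw [Finset.sum_congr rfl fun j _ => this j, ← Finset.mul_sum]
      rw [max_eq_left (by linarith : (0:ℝ) ≤ (∑ j, X i j) - μ i)]
      field_simp
  rw [Finset.sum_congr rfl fun i _ => key i]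
  have hsum : ∑ i, ((∑ j, X i j) - μ i) = 0 := by
    rw [Finset.sum_sub_distrib, hX1, hμ1]; ring
  have : ∀ i : Fin n, max ((∑ j, X i j) - μ i) 0
      = (((∑ j, X i j) - μ i) + |(∑ j, X i j) - μ i|) / 2 := by
    intro i
    rcases le_or_gt 0 ((∑ j, X i j) - μ i) with h | h
    · rw [max_eq_left h, abs_of_nonneg h]; ring
    · rw [max_eq_right h.le, abs_of_neg h]; ring
  rw [Finset.sum_congr rfl fun i _ => this i]
  rw [← Finset.sum_div, Finset.sum_add_distrib, hsum]
  ring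
end

section
/- Let U ⊆ ℝ^d be an open convex set and ξ : ℝ^d → ℝ ∪ {+∞} a convex function that is finite and differentiable on U. For x ∈ dom ξ and y ∈ U define the Bregman divergence D(x, y) = ξ(x) − ξ(y) − ⟨∇ξ(y), x − y⟩. Let f : ℝ^d → ℝ ∪ {+∞} be a proper convex function, τ > 0, x̄ ∈ U, and suppose x⁺ ∈ U is a minimizer over ℝ^d of x ↦ f(x) + τ^{-1} D(x, x̄). Then for every x ∈ dom ξ ∩ dom f it holds τ (f(x⁺) − f(x)) ≤ D(x, x̄) − D(x, x⁺) − D(x⁺, x̄). -/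
/-!
By the three-point identity the right-hand side equals `⟪∇ξ x⁺ − ∇ξ x̄, x − x⁺⟫`, so the claim is
the first-order optimality condition of `x⁺` for `f + τ⁻¹ D(·, x̄)`, a convex function plus a
function differentiable at `x⁺`. Along the segment from `x⁺` to `x`, convexity of `f` makes
`t ↦ ψ (x⁺ + t (x − x⁺)) − t (f x⁺ − f x)` minimal on `[0, 1]` at `t = 0`, and Fermat's rule
at this endpoint gives the inequality.
-/

open scoped RealInnerProductSpace
open Set

theorem ConvexOn.sub_le_of_isMinOn_add {E : Type*} [NormedAddCommGroup E] [NormedSpace ℝ E]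
    {s : Set E} {h ψ : E → ℝ} {ψ' : E →L[ℝ] ℝ} {a x : E} (hh : ConvexOn ℝ s h)
    (hψ : HasFDerivAt ψ ψ' a) (hmin : IsMinOn (h + ψ) s a) (ha : a ∈ s) (hx : x ∈ s) :
    h a - h x ≤ ψ' (x - a) := by
  set φ : ℝ → ℝ := fun t => ψ (a + t • (x - a)) - t * (h a - h x)
  have hφ : HasDerivAt φ (ψ' (x - a) - (h a - h x)) 0 := by
    have hline : HasDerivAt (fun t : ℝ => a + t • (x - a)) (x - a) 0 := by
      simpa using ((hasDerivAt_id (0 : ℝ)).smul_const (x - a)).const_add a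
    have hψ0 : HasFDerivAt ψ ψ' (a + (0 : ℝ) • (x - a)) := by simpa using hψ
    exact (hψ0.comp_hasDerivAt 0 hline).sub (hasDerivAt_mul_const _)
  have hφmin : IsMinOn φ (Icc 0 1) 0 := by
    rintro t ⟨ht0, ht1⟩
    have hpt : a + t • (x - a) = (1 - t) • a + t • x := by module
    have hconv : h ((1 - t) • a + t • x) ≤ (1 - t) * h a + t * h x :=
      hh.2 ha hx (sub_nonneg.2 ht1) ht0 (sub_add_cancel 1 t)
    have hle : h a + ψ a ≤ h ((1 - t) • a + t • x) + ψ ((1 - t) • a + t • x) :=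
      hmin (hh.1 ha hx (sub_nonneg.2 ht1) ht0 (sub_add_cancel 1 t))
    show ψ (a + (0 : ℝ) • (x - a)) - 0 * (h a - h x) ≤ ψ (a + t • (x - a)) - t * (h a - h x)
    rw [hpt, zero_smul, add_zero, zero_mul, sub_zero]
    linarith
  have hcone : (1 : ℝ) ∈ posTangentConeAt (Icc 0 1) (0 : ℝ) :=
    mem_posTangentConeAt_of_segment_subset (by simp [segment_eq_Icc])
  have hderiv := hφmin.localize.hasFDerivWithinAt_nonneg hφ.hasFDerivAt.hasFDerivWithinAt hcone
  simp only [ContinuousLinearMap.toSpanSingleton_apply, one_smul] at hderiv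
  linarith

section Bregman

variable {E : Type*} [NormedAddCommGroup E] [InnerProductSpace ℝ E]

/-- The Bregman divergence of `ξ`, with `g` playing the role of `∇ξ`. -/
noncomputable def bregmanDiv (ξ : E → ℝ) (g : E → E) (x y : E) : ℝ :=
  ξ x - ξ y - ⟪g y, x - y⟫

theorem bregmanDiv_sub_bregmanDiv_sub_bregmanDiv (ξ : E → ℝ) (g : E → E) (x y z : E) :
    bregmanDiv ξ g x y - bregmanDiv ξ g x z - bregmanDiv ξ g z y = ⟪g z - g y, x - z⟫ := by
  simp only [bregmanDiv, inner_sub_left, inner_sub_right]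
  ring

theorem HasGradientAt.hasFDerivAt_bregmanDiv [CompleteSpace E] {ξ : E → ℝ} {g : E → E} {y z : E}
    (hξ : HasGradientAt ξ (g z) z) :
    HasFDerivAt (bregmanDiv ξ g · y) (InnerProductSpace.toDual ℝ E (g z - g y)) z := by
  have hlin : HasFDerivAt (fun w => ⟪g y, w - y⟫) (InnerProductSpace.toDual ℝ E (g y)) z := by
    simpa [inner_sub_right] using
      (InnerProductSpace.toDual ℝ E (g y)).hasFDerivAt.sub_const ⟪g y, y⟫
  rw [map_sub]
  exact (hξ.hasFDerivAt.sub_const (ξ y)).sub hlin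

end Bregman

theorem chen_teboulle_three_point_general
    (d : ℕ) (U domξ domf : Set (EuclideanSpace ℝ (Fin d)))
    (ξ f : EuclideanSpace ℝ (Fin d) → ℝ)
    (g : EuclideanSpace ℝ (Fin d) → EuclideanSpace ℝ (Fin d))
    (hUsub : U ⊆ domξ)
    (hξ : ConvexOn ℝ domξ ξ)
    (hgrad : ∀ y ∈ U, HasGradientAt ξ (g y) y)
    (hf : ConvexOn ℝ domf f)
    (D : EuclideanSpace ℝ (Fin d) → EuclideanSpace ℝ (Fin d) → ℝ)
    (hD : ∀ x y, D x y = ξ x - ξ y - ⟪g y, x - y⟫)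
    (τ : ℝ) (hτ : 0 < τ)
    (xb xp : EuclideanSpace ℝ (Fin d)) (hxp : xp ∈ U)
    (hxpf : xp ∈ domf)
    (hmin : ∀ x ∈ domf ∩ domξ, f xp + τ⁻¹ * D xp xb ≤ f x + τ⁻¹ * D x xb) :
    ∀ x ∈ domξ ∩ domf, τ * (f xp - f x) ≤ D x xb - D x xp - D xp xb := by
  rintro x ⟨hxξ, hxf⟩
  obtain rfl : D = bregmanDiv ξ g := funext₂ hD
  have hfconv : ConvexOn ℝ (domf ∩ domξ) f := hf.subset inter_subset_left (hf.1.inter hξ.1)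
  have hderiv := ((hgrad xp hxp).hasFDerivAt_bregmanDiv (y := xb)).const_mul τ⁻¹
  have hopt := hfconv.sub_le_of_isMinOn_add hderiv hmin ⟨hxpf, hUsub hxp⟩ ⟨hxf, hxξ⟩
  rw [smul_apply, InnerProductSpace.toDual_apply_apply, smul_eq_mul] at hopt
  rw [bregmanDiv_sub_bregmanDiv_sub_bregmanDiv, ← le_div_iff₀' hτ, div_eq_inv_mul]
  exact hopt

/-- **Three-point inequality of Chen and Teboulle (1993).**
Let `ξ` be convex (with domain `domξ`), finite and differentiable on an open
convex set `U ⊆ domξ`, with Bregman divergence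
`D x y = ξ x − ξ y − ⟪∇ξ y, x − y⟫`. If `x⁺ ∈ U` minimizes
`x ↦ f x + τ⁻¹ D x x̄` (with `f` proper convex with domain `domf`), then for all
`x ∈ domξ ∩ domf` we have `τ (f x⁺ − f x) ≤ D x x̄ − D x x⁺ − D x⁺ x̄`. -/
theorem chen_teboulle_three_point
    (d : ℕ) (U domξ domf : Set (EuclideanSpace ℝ (Fin d)))
    (ξ f : EuclideanSpace ℝ (Fin d) → ℝ)
    (g : EuclideanSpace ℝ (Fin d) → EuclideanSpace ℝ (Fin d))
    (hUopen : IsOpen U) (hUconv : Convex ℝ U) (hUsub : U ⊆ domξ)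
    (hξ : ConvexOn ℝ domξ ξ)
    (hgrad : ∀ y ∈ U, HasGradientAt ξ (g y) y)
    (hfne : domf.Nonempty) (hf : ConvexOn ℝ domf f)
    (D : EuclideanSpace ℝ (Fin d) → EuclideanSpace ℝ (Fin d) → ℝ)
    (hD : ∀ x y, D x y = ξ x - ξ y - ⟪g y, x - y⟫)
    (τ : ℝ) (hτ : 0 < τ)
    (xb xp : EuclideanSpace ℝ (Fin d)) (hxb : xb ∈ U) (hxp : xp ∈ U)
    (hxpf : xp ∈ domf)
    (hmin : ∀ x ∈ domf ∩ domξ, f xp + τ⁻¹ * D xp xb ≤ f x + τ⁻¹ * D x xb) :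
    ∀ x ∈ domξ ∩ domf, τ * (f xp - f x) ≤ D x xb - D x xp - D xp xb :=
  chen_teboulle_three_point_general d U domξ domf ξ f g hUsub hξ hgrad hf D hD τ hτ xb xp hxp hxpf
    hmin
end

section
/- Let f : ℝ^d → ℝ be convex, let N ≥ 1, let τ₀, τ₁, ..., τ_N be positive reals and θ_k = τ_k/τ_{k−1} for k = 1, ..., N, and assume τ_{k−1}(1 + θ_{k−1}) − τ_k θ_k ≥ 0 for k = 2, ..., N. Given points x⁰, x¹, ..., x^N ∈ ℝ^d, define x̄^k = (1 + θ_k) x^k − θ_k x^{k−1} for k = 1, ..., N, and T_N = Σ_{k=1}^N τ_k. Then Σ_{k=1}^N [ τ_k (1 + θ_k) f(x^k) − τ_k θ_k f(x^{k−1}) ] ≥ (τ₁θ₁ + T_N) · f( (τ₁θ₁ x⁰ + Σ_{k=1}^N τ_k x̄^k) / (τ₁θ₁ + T_N) ) − τ₁θ₁ f(x⁰). -/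
/-- Telescoping rearrangement of the HPD sum, in any real module. -/
lemma hpd_telescope {M : Type*} [AddCommGroup M] [Module ℝ M]
    (τ θ : ℕ → ℝ) (p : ℕ → M) :
    ∀ N, 1 ≤ N →
    ∑ k ∈ Finset.Icc 1 N, ((τ k * (1 + θ k)) • p k - (τ k * θ k) • p (k - 1))
      = ∑ k ∈ Finset.Icc 1 N,
          (if k = N then τ N * (1 + θ N)
            else τ k * (1 + θ k) - τ (k + 1) * θ (k + 1)) • p k
        - (τ 1 * θ 1) • p 0 := by
  intro N
  induction N with
  | zero => intro h; omega
  | succ n ih =>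
    intro _
    rcases Nat.lt_or_ge n 1 with h1 | hn
    · have hn : n = 0 := by omega
      subst hn
      simp
    · have hstep : (1 : ℕ) ≤ n + 1 := by omega
      rw [Finset.sum_Icc_succ_top hstep, Finset.sum_Icc_succ_top hstep, ih hn]
      have hkey :
          ∑ k ∈ Finset.Icc 1 n,
            (if k = n + 1 then τ (n+1) * (1 + θ (n+1))
              else τ k * (1 + θ k) - τ (k + 1) * θ (k + 1)) • p k
          = ∑ k ∈ Finset.Icc 1 n,
            (if k = n then τ n * (1 + θ n)
              else τ k * (1 + θ k) - τ (k + 1) * θ (k + 1)) • p k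
            - (τ (n+1) * θ (n+1)) • p n := by
        have hsplit : ∀ k ∈ Finset.Icc 1 n,
            (if k = n + 1 then τ (n+1) * (1 + θ (n+1))
              else τ k * (1 + θ k) - τ (k + 1) * θ (k + 1)) • p k
            = (if k = n then τ n * (1 + θ n)
                else τ k * (1 + θ k) - τ (k + 1) * θ (k + 1)) • p k
              - (if k = n then (τ (n+1) * θ (n+1)) • p n else 0) := by
          intro k hk
          simp only [Finset.mem_Icc] at hk
          have hkne : k ≠ n + 1 := by omega
          rw [if_neg hkne]
          by_cases hkn : k = n
          · subst hkn
            rw [if_pos rfl, if_pos rfl, ← sub_smul]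
          · rw [if_neg hkn, if_neg hkn, sub_zero]
        rw [Finset.sum_congr rfl hsplit, Finset.sum_sub_distrib,
          Finset.sum_ite_eq' (Finset.Icc 1 n) n (fun _ => (τ (n+1) * θ (n+1)) • p n),
          if_pos (by simp [Finset.mem_Icc]; omega)]
      rw [hkey]
      simp only [eq_self_iff_true, if_true]
      abel

/-- **Convexity averaging inequality in the HPD linesearch analysis.**
For a convex `f`, positive step sizes `τ_k`, ratios `θ_k = τ_k/τ_{k−1}`, and
extrapolated points `x̄^k = (1+θ_k)x^k − θ_k x^{k−1}`, if
`τ_{k−1}(1+θ_{k−1}) − τ_k θ_k ≥ 0` for `2 ≤ k ≤ N`, then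
`Σ_{k=1}^N [τ_k(1+θ_k) f(x^k) − τ_kθ_k f(x^{k−1})]
  ≥ (τ₁θ₁ + T_N) f((τ₁θ₁ x⁰ + Σ τ_k x̄^k)/(τ₁θ₁ + T_N)) − τ₁θ₁ f(x⁰)`. -/
theorem hpd_convexity_averaging
    (d N : ℕ) (hN : 1 ≤ N)
    (f : (Fin d → ℝ) → ℝ) (hf : ConvexOn ℝ Set.univ f)
    (τ : ℕ → ℝ) (hτ : ∀ k ≤ N, 0 < τ k)
    (θ : ℕ → ℝ) (hθ : ∀ k, 1 ≤ k → k ≤ N → θ k = τ k / τ (k - 1))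
    (hcoef : ∀ k, 2 ≤ k → k ≤ N → 0 ≤ τ (k - 1) * (1 + θ (k - 1)) - τ k * θ k)
    (x xbar : ℕ → (Fin d → ℝ))
    (hxbar : ∀ k, 1 ≤ k → k ≤ N →
      xbar k = (1 + θ k) • x k - θ k • x (k - 1))
    (T : ℝ) (hT : T = ∑ k ∈ Finset.Icc 1 N, τ k) :
    (τ 1 * θ 1 + T) *
        f ((τ 1 * θ 1 + T)⁻¹ •
          ((τ 1 * θ 1) • x 0 + ∑ k ∈ Finset.Icc 1 N, τ k • xbar k)) -
      τ 1 * θ 1 * f (x 0) ≤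
    ∑ k ∈ Finset.Icc 1 N,
      (τ k * (1 + θ k) * f (x k) - τ k * θ k * f (x (k - 1))) := by
  set S : ℝ := τ 1 * θ 1 + T with hS
  set c : ℕ → ℝ := fun k =>
    if k = N then τ N * (1 + θ N)
    else τ k * (1 + θ k) - τ (k + 1) * θ (k + 1) with hc
  -- positivity facts
  have hθpos : ∀ k, 1 ≤ k → k ≤ N → 0 < θ k := by
    intro k h1 h2
    rw [hθ k h1 h2]
    exact div_pos (hτ k h2) (hτ (k - 1) (by omega))
  have hTpos : 0 < T := by
    rw [hT]
    exact Finset.sum_pos (fun k hk => hτ k (Finset.mem_Icc.mp hk).2)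
      ⟨1, Finset.mem_Icc.mpr ⟨le_refl 1, hN⟩⟩
  have hSpos : 0 < S := by
    have := mul_pos (hτ 1 hN) (hθpos 1 le_rfl hN)
    rw [hS]; linarith
  -- nonnegativity of c
  have hcnn : ∀ k ∈ Finset.Icc 1 N, 0 ≤ c k := by
    intro k hk
    simp only [Finset.mem_Icc] at hk
    by_cases hkN : k = N
    · simp only [hc, if_pos hkN]
      have := hθpos N hN le_rfl
      nlinarith [hτ N le_rfl]
    · simp only [hc, if_neg hkN]
      have h2 : 2 ≤ k + 1 := by omega
      have hle : k + 1 ≤ N := by omega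
      have := hcoef (k + 1) h2 hle
      simpa using this
  -- sum of c
  have hcsum : ∑ k ∈ Finset.Icc 1 N, c k = S := by
    have ht := hpd_telescope τ θ (fun _ => (1 : ℝ)) N hN
    simp only [smul_eq_mul, mul_one] at ht
    have hL : ∑ k ∈ Finset.Icc 1 N, (τ k * (1 + θ k) - τ k * θ k) = T := by
      rw [hT]
      exact Finset.sum_congr rfl (fun k _ => by ring)
    rw [hL] at ht
    rw [hS]
    simp only [hc]
    linarith [ht]
  -- vector identity
  have hvec : (τ 1 * θ 1) • x 0 + ∑ k ∈ Finset.Icc 1 N, τ k • xbar k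
      = ∑ k ∈ Finset.Icc 1 N, c k • x k := by
    have h1 : ∑ k ∈ Finset.Icc 1 N, τ k • xbar k
        = ∑ k ∈ Finset.Icc 1 N,
            ((τ k * (1 + θ k)) • x k - (τ k * θ k) • x (k - 1)) := by
      refine Finset.sum_congr rfl (fun k hk => ?_)
      simp only [Finset.mem_Icc] at hk
      rw [hxbar k hk.1 hk.2, smul_sub, smul_smul, smul_smul]
    rw [h1, hpd_telescope τ θ x N hN]
    simp only [hc]
    abel
  -- scalar identity
  have hscal : ∑ k ∈ Finset.Icc 1 N,
      (τ k * (1 + θ k) * f (x k) - τ k * θ k * f (x (k - 1)))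
      = ∑ k ∈ Finset.Icc 1 N, c k * f (x k) - τ 1 * θ 1 * f (x 0) := by
    have ht := hpd_telescope τ θ (fun k => f (x k)) N hN
    simp only [smul_eq_mul] at ht
    simpa only [hc] using ht
  -- Jensen
  have hjensen : f ((τ 1 * θ 1 + T)⁻¹ •
        ((τ 1 * θ 1) • x 0 + ∑ k ∈ Finset.Icc 1 N, τ k • xbar k))
      ≤ S⁻¹ * ∑ k ∈ Finset.Icc 1 N, c k * f (x k) := by
    have hmass := hf.map_centerMass_le hcnn (by rw [hcsum]; exact hSpos)
      (fun k _ => Set.mem_univ (x k))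
    rw [Finset.centerMass, hcsum] at hmass
    rw [hvec, ← hS]
    refine le_trans hmass ?_
    rw [Finset.centerMass, hcsum, smul_eq_mul]
    apply le_of_eq
    congr 1
  rw [hscal]
  have h2 : S * f ((τ 1 * θ 1 + T)⁻¹ •
        ((τ 1 * θ 1) • x 0 + ∑ k ∈ Finset.Icc 1 N, τ k • xbar k))
      ≤ ∑ k ∈ Finset.Icc 1 N, c k * f (x k) := by
    calc S * _ ≤ S * (S⁻¹ * ∑ k ∈ Finset.Icc 1 N, c k * f (x k)) :=
          mul_le_mul_of_nonneg_left hjensen hSpos.le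
      _ = ∑ k ∈ Finset.Icc 1 N, c k * f (x k) := by
          rw [← mul_assoc, mul_inv_cancel₀ hSpos.ne', one_mul]
  linarith [h2]
end

section
/- Let γ > 0, L > 0, ρ ∈ (0, 1], and let τ_{k−1}, τ_k, β_{k−1}, β_k, β_{k+1} be positive reals satisfying β_k = β_{k−1} / (1 + γ τ_{k−1} β_{k−1}) and β_{k+1} = β_k / (1 + γ τ_k β_k). Set θ_k = τ_k / τ_{k−1} and τ_{k+1} = τ_k √(1 + θ_k). If τ_k ≥ ρ / (√(β_k) L), then τ_{k+1} ≥ ρ / (√(β_{k+1}) L). -/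
/-- **Propagation of the step-size lower bound in the strongly convex HPD.**
With the updates `β_k = β_{k−1}/(1 + γτ_{k−1}β_{k−1})`,
`β_{k+1} = β_k/(1 + γτ_kβ_k)`, `θ_k = τ_k/τ_{k−1}` and
`τ_{k+1} = τ_k √(1 + θ_k)`, the bound `τ_k ≥ ρ/(√β_k L)` implies
`τ_{k+1} ≥ ρ/(√β_{k+1} L)`. -/
theorem hpd_step_lower_bound_propagates
    (γ L ρ : ℝ) (hγ : 0 < γ) (hL : 0 < L) (hρ0 : 0 < ρ) (hρ1 : ρ ≤ 1)
    (τkm τk βkm βk βkp : ℝ) (hτkm : 0 < τkm) (hτk : 0 < τk) (hβkm : 0 < βkm)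
    (hβk : βk = βkm / (1 + γ * τkm * βkm))
    (hβkp : βkp = βk / (1 + γ * τk * βk))
    (θk τkp : ℝ) (hθk : θk = τk / τkm)
    (hτkp : τkp = τk * Real.sqrt (1 + θk))
    (hlow : ρ / (Real.sqrt βk * L) ≤ τk) :
    ρ / (Real.sqrt βkp * L) ≤ τkp := by
  have hA : 0 < 1 + γ * τkm * βkm := by positivity
  have hβk' : 0 < βk := by rw [hβk]; positivity
  have hD2 : 0 < 1 + γ * τk * βk := by positivity
  have h2 : γ * τkm * βk ≤ 1 := by
    rw [hβk, ← mul_div_assoc, div_le_one hA]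
    linarith
  have h1 : γ * τk * βk ≤ θk := by
    rw [hθk, le_div_iff₀ hτkm]
    nlinarith
  have hsb : 0 < Real.sqrt βk := Real.sqrt_pos.mpr hβk'
  have hsD2 : 0 < Real.sqrt (1 + γ * τk * βk) := Real.sqrt_pos.mpr hD2
  have key : ρ / (Real.sqrt βkp * L)
      = ρ / (Real.sqrt βk * L) * Real.sqrt (1 + γ * τk * βk) := by
    rw [hβkp, Real.sqrt_div hβk'.le]
    field_simp
  calc ρ / (Real.sqrt βkp * L)
      = ρ / (Real.sqrt βk * L) * Real.sqrt (1 + γ * τk * βk) := key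
    _ ≤ τk * Real.sqrt (1 + γ * τk * βk) :=
        mul_le_mul_of_nonneg_right hlow hsD2.le
    _ ≤ τk * Real.sqrt (1 + θk) :=
        mul_le_mul_of_nonneg_left (Real.sqrt_le_sqrt (by linarith)) hτk.le
    _ = τkp := hτkp.symm
end

section
/- Let c > 0, let l ≥ 0 be an integer, and let (β_k)_{k ≥ l} be a sequence of positive reals satisfying 1/β_k ≥ 1/β_{k−1} + c/√(β_{k−1}) for all k > l. If β_l ≤ 64/c², then for all k ≥ l it holds β_k ≤ ( 1/√(β_l) + c(k − l)/4 )^{−2}. -/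
/-- **O(1/k²) decay of the step-ratio parameters.**
If `1/β_k ≥ 1/β_{k−1} + c/√β_{k−1}` for all `k > l` and `β_l ≤ 64/c²`, then
`β_k ≤ (1/√β_l + c(k−l)/4)⁻²` for all `k ≥ l`. -/
theorem beta_inverse_quadratic_decay
    (c : ℝ) (hc : 0 < c) (l : ℕ) (β : ℕ → ℝ)
    (hpos : ∀ k, l ≤ k → 0 < β k)
    (hrec : ∀ k, l < k → 1 / β (k - 1) + c / Real.sqrt (β (k - 1)) ≤ 1 / β k)
    (hl : β l ≤ 64 / c ^ 2) :
    ∀ k, l ≤ k →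
      β k ≤ ((1 / Real.sqrt (β l) + c * ((k - l : ℕ) : ℝ) / 4) ^ 2)⁻¹ := by
  have hβl := hpos l le_rfl
  have hsl : 0 < Real.sqrt (β l) := Real.sqrt_pos.2 hβl
  set a : ℝ := 1 / Real.sqrt (β l) with ha
  have hapos : 0 < a := by positivity
  have ha8 : c / 8 ≤ a := by
    have h1 : Real.sqrt (β l) ≤ 8 / c := by
      have := Real.sqrt_le_sqrt hl
      rwa [show (64 : ℝ) / c ^ 2 = (8 / c) ^ 2 by field_simp; ring,
        Real.sqrt_sq (by positivity)] at this
    have h2 : 1 / (8 / c) ≤ 1 / Real.sqrt (β l) :=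
      one_div_le_one_div_of_le hsl h1
    rwa [show (1 : ℝ) / (8 / c) = c / 8 by field_simp] at h2
  have H : ∀ k, l ≤ k → (a + c * ((k - l : ℕ) : ℝ) / 4) ^ 2 ≤ 1 / β k := by
    intro k hk
    induction k, hk using Nat.le_induction with
    | base =>
      simp only [Nat.sub_self, Nat.cast_zero, mul_zero, zero_div, add_zero]
      rw [ha, div_pow, one_pow, Real.sq_sqrt hβl.le]
    | succ k hk ih =>
      set S : ℝ := a + c * ((k - l : ℕ) : ℝ) / 4 with hS
      have hSnn : 0 ≤ c * ((k - l : ℕ) : ℝ) / 4 := by positivity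
      have hS8 : c / 8 ≤ S := le_trans ha8 (by rw [hS]; linarith)
      have hSpos : 0 < S := lt_of_lt_of_le (by positivity) hS8
      have hbk := hpos k hk
      have hsk : 0 < Real.sqrt (β k) := Real.sqrt_pos.2 hbk
      have h2 : S ≤ 1 / Real.sqrt (β k) := by
        have h3 : S ≤ Real.sqrt (1 / β k) := Real.le_sqrt' hSpos |>.2 ih
        rwa [one_div, Real.sqrt_inv, ← one_div] at h3
      have hrec' := hrec (k + 1) (by omega)
      simp only [Nat.add_sub_cancel] at hrec'
      have hcast : ((k + 1 - l : ℕ) : ℝ) = ((k - l : ℕ) : ℝ) + 1 := by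
        rw [show k + 1 - l = (k - l) + 1 by omega]; push_cast; ring
      rw [hcast]
      have hgoal : (a + c * (((k - l : ℕ) : ℝ) + 1) / 4) ^ 2 = S ^ 2 + c * S / 2 + c ^ 2 / 16 := by
        rw [hS]; ring
      rw [hgoal]
      have h4 : c * S ≤ c * (1 / Real.sqrt (β k)) :=
        mul_le_mul_of_nonneg_left h2 hc.le
      rw [mul_one_div] at h4
      nlinarith [ih, hrec', h4, hS8, hc.le]
  intro k hk
  have h1 := H k hk
  have hbk := hpos k hk
  have hSpos : 0 < (a + c * ((k - l : ℕ) : ℝ) / 4) := by positivity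
  rw [one_div] at h1
  calc β k = ((β k)⁻¹)⁻¹ := (inv_inv _).symm
    _ ≤ ((a + c * ((k - l : ℕ) : ℝ) / 4) ^ 2)⁻¹ :=
        inv_anti₀ (by positivity) h1
end

section
/- Let n ≥ 1, δ ∈ (0, 1), σ > 0, A ∈ ℝ^{n×n}, and let X̄ ∈ ℝ^{n×n} satisfy X̄_{ij} ≥ δ/n² for all i,j and Σ_{i,j} X̄_{ij} = 1. Let Δ_δ = { X ∈ ℝ^{n×n} : X_{ij} ≥ δ/n² for all i,j, Σ_{i,j} X_{ij} = 1 }. Set Z_{ij} = X̄_{ij} e^{−σ A_{ij}} and let s* > 0 be the unique fixed point of T(s) = Σ_{i,j} max{ Z_{ij}, s δ/n² }. Then the function X ↦ ⟨A, X⟩ + σ^{-1} Σ_{i,j} X_{ij} ln(X_{ij}/X̄_{ij}) attains its minimum over Δ_δ at the unique point X* given by X*_{ij} = max{ Z_{ij}/s*, δ/n² }. -/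
private lemma keylog {x0 x : ℝ} (hx0 : 0 < x0) (hx : 0 < x) :
    x0 * Real.log x0 + (Real.log x0 + 1) * (x - x0) ≤ x * Real.log x := by
  have h : Real.log (x0 / x) ≤ x0 / x - 1 := Real.log_le_sub_one_of_pos (by positivity)
  rw [Real.log_div (ne_of_gt hx0) (ne_of_gt hx)] at h
  have h2 := mul_le_mul_of_nonneg_left h (le_of_lt hx)
  have h3 : x * (x0 / x - 1) = x0 - x := by field_simp
  nlinarith [h2, h3]

private lemma keylog_strict {x0 x : ℝ} (hx0 : 0 < x0) (hx : 0 < x) (hne : x ≠ x0) :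
    x0 * Real.log x0 + (Real.log x0 + 1) * (x - x0) < x * Real.log x := by
  have hq : x0 / x ≠ 1 := by
    intro h
    rw [div_eq_one_iff_eq (ne_of_gt hx)] at h
    exact hne h.symm
  have h : Real.log (x0 / x) < x0 / x - 1 := Real.log_lt_sub_one_of_pos (by positivity) hq
  rw [Real.log_div (ne_of_gt hx0) (ne_of_gt hx)] at h
  have h2 := mul_lt_mul_of_pos_left h hx
  have h3 : x * (x0 / x - 1) = x0 - x := by field_simp
  nlinarith [h2, h3]

private lemma entry_convex (a c s x0 x : ℝ) (hc : 0 < c) (hs : 0 < s)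
    (hx0 : 0 < x0) (hx : 0 < x) :
    a * x0 + s⁻¹ * (x0 * Real.log (x0 / c))
      + (a + s⁻¹ * (Real.log (x0 / c) + 1)) * (x - x0)
      ≤ a * x + s⁻¹ * (x * Real.log (x / c)) := by
  have hk := keylog hx0 hx
  have hs' : (0:ℝ) < s⁻¹ := inv_pos.2 hs
  rw [Real.log_div (ne_of_gt hx0) (ne_of_gt hc), Real.log_div (ne_of_gt hx) (ne_of_gt hc)]
  nlinarith [mul_le_mul_of_nonneg_left hk (le_of_lt hs')]

private lemma entry_convex_strict (a c s x0 x : ℝ) (hc : 0 < c) (hs : 0 < s)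
    (hx0 : 0 < x0) (hx : 0 < x) (hne : x ≠ x0) :
    a * x0 + s⁻¹ * (x0 * Real.log (x0 / c))
      + (a + s⁻¹ * (Real.log (x0 / c) + 1)) * (x - x0)
      < a * x + s⁻¹ * (x * Real.log (x / c)) := by
  have hk := keylog_strict hx0 hx hne
  have hs' : (0:ℝ) < s⁻¹ := inv_pos.2 hs
  rw [Real.log_div (ne_of_gt hx0) (ne_of_gt hc), Real.log_div (ne_of_gt hx) (ne_of_gt hc)]
  nlinarith [mul_lt_mul_of_pos_left hk hs']

/-- **Closed form of the scaled-entropy proximal step.**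
On the truncated simplex `Δ_δ = {X : X_{ij} ≥ δ/n², ΣX = 1}`, the function
`X ↦ ⟨A, X⟩ + σ⁻¹ KL(X, X̄)` attains its minimum at the unique point
`X*_{ij} = max{Z_{ij}/s*, δ/n²}`, where `Z_{ij} = X̄_{ij} e^{−σA_{ij}}` and `s*`
is the fixed point of `T(s) = Σ max{Z_{ij}, sδ/n²}`. -/
theorem scaled_entropy_prox_closed_form
    (n : ℕ) (hn : 1 ≤ n) (δ σ : ℝ) (hδ0 : 0 < δ) (hδ1 : δ < 1) (hσ : 0 < σ)
    (A Xb : Matrix (Fin n) (Fin n) ℝ)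
    (hXb : ∀ i j, δ / (n : ℝ) ^ 2 ≤ Xb i j) (hXb1 : ∑ i, ∑ j, Xb i j = 1)
    (Z : Matrix (Fin n) (Fin n) ℝ)
    (hZ : ∀ i j, Z i j = Xb i j * Real.exp (-σ * A i j))
    (sstar : ℝ) (hs0 : 0 < sstar)
    (hfix : sstar = ∑ i, ∑ j, max (Z i j) (sstar * δ / (n : ℝ) ^ 2))
    (f : Matrix (Fin n) (Fin n) ℝ → ℝ)
    (hf : ∀ X, f X = (∑ i, ∑ j, A i j * X i j)
      + σ⁻¹ * ∑ i, ∑ j, X i j * Real.log (X i j / Xb i j))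
    (Xs : Matrix (Fin n) (Fin n) ℝ)
    (hXs : ∀ i j, Xs i j = max (Z i j / sstar) (δ / (n : ℝ) ^ 2)) :
    ((∀ i j, δ / (n : ℝ) ^ 2 ≤ Xs i j) ∧ ∑ i, ∑ j, Xs i j = 1) ∧
    (∀ X : Matrix (Fin n) (Fin n) ℝ,
      (∀ i j, δ / (n : ℝ) ^ 2 ≤ X i j) → (∑ i, ∑ j, X i j = 1) → f Xs ≤ f X) ∧
    (∀ X : Matrix (Fin n) (Fin n) ℝ,
      (∀ i j, δ / (n : ℝ) ^ 2 ≤ X i j) → (∑ i, ∑ j, X i j = 1) →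
      (∀ Y : Matrix (Fin n) (Fin n) ℝ,
        (∀ i j, δ / (n : ℝ) ^ 2 ≤ Y i j) → (∑ i, ∑ j, Y i j = 1) → f X ≤ f Y) →
      X = Xs) := by
  have hnR : (1:ℝ) ≤ (n:ℝ) := by exact_mod_cast hn
  have hn2 : (0:ℝ) < (n:ℝ) ^ 2 := by nlinarith
  set d : ℝ := δ / (n : ℝ) ^ 2 with hd_def
  have hd : 0 < d := div_pos hδ0 hn2
  have hXbpos : ∀ i j, 0 < Xb i j := fun i j => lt_of_lt_of_le hd (hXb i j)
  have hZpos : ∀ i j, 0 < Z i j := by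
    intro i j; rw [hZ]; exact mul_pos (hXbpos i j) (Real.exp_pos _)
  have hXsd : ∀ i j, d ≤ Xs i j := by
    intro i j; rw [hXs]; exact le_max_right _ _
  have hXspos : ∀ i j, 0 < Xs i j := fun i j => lt_of_lt_of_le hd (hXsd i j)
  -- sum of Xs is 1
  have hfix' : sstar = ∑ i, ∑ j, max (Z i j) (sstar * d) := by
    rw [hd_def]; simpa only [mul_div_assoc] using hfix
  have hmaxdiv : ∀ i j, Xs i j = max (Z i j) (sstar * d) / sstar := by
    intro i j
    rw [hXs i j]
    rcases le_total (Z i j) (sstar * d) with h | h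
    · rw [max_eq_right h, max_eq_right, mul_comm, mul_div_assoc,
        div_self (ne_of_gt hs0), mul_one]
      rw [div_le_iff₀ hs0]; linarith [mul_comm d sstar]
    · rw [max_eq_left h, max_eq_left]
      rw [le_div_iff₀ hs0]; linarith [mul_comm d sstar]
  have hsum1 : ∑ i, ∑ j, Xs i j = 1 := by
    have h1 : ∑ i, ∑ j, Xs i j = ∑ i, ∑ j, max (Z i j) (sstar * d) / sstar :=
      Finset.sum_congr rfl fun i _ => Finset.sum_congr rfl fun j _ => hmaxdiv i j
    rw [h1]
    simp only [← Finset.sum_div]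
    rw [← hfix', div_self (ne_of_gt hs0)]
  -- log of the unconstrained candidate
  have hlogZ : ∀ i j, Real.log ((Z i j / sstar) / Xb i j) = -σ * A i j - Real.log sstar := by
    intro i j
    have hE : (Z i j / sstar) / Xb i j = Real.exp (-σ * A i j) / sstar := by
      rw [hZ]
      field_simp [ne_of_gt (hXbpos i j), ne_of_gt hs0]
    rw [hE, Real.log_div (Real.exp_ne_zero _) (ne_of_gt hs0), Real.log_exp]
  set lam : ℝ := σ⁻¹ * (1 - Real.log sstar) with hlam_def
  set g : Fin n → Fin n → ℝ → ℝ :=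
    fun i j x => A i j * x + σ⁻¹ * (x * Real.log (x / Xb i j)) with hg_def
  -- the slope at Xs dominates lam in the right direction
  have hslope : ∀ i j (x : ℝ), d ≤ x →
      lam * (x - Xs i j) ≤
        (A i j + σ⁻¹ * (Real.log (Xs i j / Xb i j) + 1)) * (x - Xs i j) := by
    intro i j x hx
    rcases le_or_gt d (Z i j / sstar) with h | h
    · have hXsv : Xs i j = Z i j / sstar := by rw [hXs]; exact max_eq_left h
      have hL : Real.log (Xs i j / Xb i j) = -σ * A i j - Real.log sstar := by
        rw [hXsv]; exact hlogZ i j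
      have : A i j + σ⁻¹ * (Real.log (Xs i j / Xb i j) + 1) = lam := by
        rw [hL, hlam_def]
        field_simp
        ring
      rw [this]
    · have hXsv : Xs i j = d := by
        rw [hXs]; exact max_eq_right h.le
      have hlog_le : Real.log ((Z i j / sstar) / Xb i j) ≤ Real.log (d / Xb i j) := by
        apply Real.log_le_log (div_pos (div_pos (hZpos i j) hs0) (hXbpos i j))
        exact (div_le_div_iff_of_pos_right (hXbpos i j)).mpr h.le
      rw [hlogZ i j] at hlog_le
      have hlm : lam ≤ A i j + σ⁻¹ * (Real.log (Xs i j / Xb i j) + 1) := by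
        rw [hXsv, hlam_def]
        have h2 := mul_le_mul_of_nonneg_left hlog_le (inv_nonneg.mpr hσ.le)
        have h3 : σ⁻¹ * (-σ * A i j - Real.log sstar)
            = -A i j - σ⁻¹ * Real.log sstar := by
          field_simp
        rw [h3] at h2
        nlinarith
      have hxx : 0 ≤ x - Xs i j := by rw [hXsv]; linarith
      exact mul_le_mul_of_nonneg_right hlm hxx
  -- per-entry inequality
  have hentry : ∀ i j (x : ℝ), d ≤ x →
      g i j (Xs i j) + lam * (x - Xs i j) ≤ g i j x := by
    intro i j x hx
    have h1 := entry_convex (A i j) (Xb i j) σ (Xs i j) x (hXbpos i j) hσ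
      (hXspos i j) (lt_of_lt_of_le hd hx)
    have h2 := hslope i j x hx
    simp only [hg_def]
    linarith
  have hentry_strict : ∀ i j (x : ℝ), d ≤ x → x ≠ Xs i j →
      g i j (Xs i j) + lam * (x - Xs i j) < g i j x := by
    intro i j x hx hne
    have h1 := entry_convex_strict (A i j) (Xb i j) σ (Xs i j) x (hXbpos i j) hσ
      (hXspos i j) (lt_of_lt_of_le hd hx) hne
    have h2 := hslope i j x hx
    simp only [hg_def]
    linarith
  -- f as a double sum of g
  have hfg : ∀ X : Matrix (Fin n) (Fin n) ℝ,
      f X = ∑ p : Fin n × Fin n, g p.1 p.2 (X p.1 p.2) := by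
    intro X
    rw [hf X, Fintype.sum_prod_type]
    rw [Finset.mul_sum, ← Finset.sum_add_distrib]
    refine Finset.sum_congr rfl fun i _ => ?_
    rw [Finset.mul_sum, ← Finset.sum_add_distrib]
  -- master inequality
  have main : ∀ X : Matrix (Fin n) (Fin n) ℝ,
      (∀ i j, d ≤ X i j) → (∑ i, ∑ j, X i j = 1) →
      f Xs ≤ f X ∧ (X ≠ Xs → f Xs < f X) := by
    intro X hXd hX1
    have hsum0 : ∑ p : Fin n × Fin n, lam * (X p.1 p.2 - Xs p.1 p.2) = 0 := by
      rw [← Finset.mul_sum]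
      have : ∑ p : Fin n × Fin n, (X p.1 p.2 - Xs p.1 p.2) = 0 := by
        rw [Finset.sum_sub_distrib, Fintype.sum_prod_type, Fintype.sum_prod_type,
          hX1, hsum1, sub_self]
      rw [this, mul_zero]
    constructor
    · have hle := Finset.sum_le_sum
        (fun (p : Fin n × Fin n) (_ : p ∈ Finset.univ) =>
          hentry p.1 p.2 (X p.1 p.2) (hXd p.1 p.2))
      rw [Finset.sum_add_distrib, hsum0, add_zero] at hle
      rw [hfg X, hfg Xs]
      exact hle
    · intro hne
      obtain ⟨p, hp⟩ : ∃ p : Fin n × Fin n, X p.1 p.2 ≠ Xs p.1 p.2 := by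
        by_contra h
        push_neg at h
        exact hne (Matrix.ext fun i j => h (i, j))
      have hlt := Finset.sum_lt_sum
        (fun (q : Fin n × Fin n) (_ : q ∈ Finset.univ) =>
          hentry q.1 q.2 (X q.1 q.2) (hXd q.1 q.2))
        ⟨p, Finset.mem_univ p, hentry_strict p.1 p.2 (X p.1 p.2) (hXd p.1 p.2) hp⟩
      rw [Finset.sum_add_distrib, hsum0, add_zero] at hlt
      rw [hfg X, hfg Xs]
      exact hlt
  refine ⟨⟨hXsd, hsum1⟩, fun X hXd hX1 => (main X hXd hX1).1, ?_⟩
  intro X hXd hX1 hmin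
  by_contra hne
  have h1 : f X ≤ f Xs := hmin Xs hXsd hsum1
  have h2 : f Xs < f X := (main X hXd hX1).2 hne
  linarith
end
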